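/- If L ⊆ w1*w2*⋯wn* is a VAS language over Σ for words w1,…,wn ∈ Σ*, then the set U = {(x1,…,xn) ∈ ℕ^n : w1^{x1}⋯wn^{xn} ∈ L} is a section of the reachability set of some vector addition system. -/

import Mathlib

/-- Kleene star of a language, as a set of lists. -/
def LangStar {α : Type*} (K : Set (List α)) : Set (List α) :=
  {w | ∃ ws : List (List α), (∀ u ∈ ws, u ∈ K) ∧ w = ws.flatten}

/-- Concatenation of two languages. -/
def LangConc {α : Type*} (K L : Set (List α)) : Set (List α) :=
  {w | ∃ u ∈ K, ∃ v ∈ L, w = u ++ v}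

/-- Concatenation `L 0 · L 1 ⋯ L (k-1)` of a finite family of languages. -/
def LangConcFn {α : Type*} {k : ℕ} (Ls : Fin k → Set (List α)) : Set (List α) :=
  {w | ∃ ws : Fin k → List α, (∀ j, ws j ∈ Ls j) ∧ w = (List.ofFn ws).flatten}

/-- `w ^ x` : the `x`-fold repetition of the word `w`. -/
def wpow {α : Type*} (w : List α) (x : ℕ) : List α := (List.replicate x w).flatten

/-- The set of factors `F(L) = {w : L ∩ Σ*wΣ* ≠ ∅}`. -/
def Factors {α : Type*} (L : Set (List α)) : Set (List α) :=
  {w | ∃ u ∈ L, ∃ x y : List α, u = x ++ w ++ y}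

/-- The set of factor tuples
`F_n(L) = {(w1,…,wn) : Σ*w1Σ*w2Σ*⋯wnΣ* ∩ L ≠ ∅}`. -/
def FactorTuples {α : Type*} (n : ℕ) (L : Set (List α)) : Set (Fin n → List α) :=
  {w | ∃ u ∈ L, ∃ g : Fin (n + 1) → List α,
      u = (List.ofFn fun i : Fin n => g i.castSucc ++ w i).flatten ++ g (Fin.last n)}

/-- A language is bounded if `L ⊆ w1* ⋯ wn*` for some words `w1,…,wn`. -/
def IsBoundedLang {α : Type*} (L : Set (List α)) : Prop :=
  ∃ (n : ℕ) (ws : Fin n → List α), L ⊆ LangConcFn fun i => LangStar {ws i}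

/-- A language is regular if it is accepted by a finite (deterministic) automaton. -/
def IsRegularLang {α : Type*} (L : Set (List α)) : Prop :=
  ∃ (σ : Type) (_ : Fintype σ) (M : DFA α σ), ∀ w, w ∈ M.accepts ↔ w ∈ L

/-- `FireList T v ts v'` : firing the sequence `ts` of transitions (all from `T`)
leads from configuration `v` to `v'`, keeping all intermediate configurations
nonnegative (automatic, as configurations live in `Fin d → ℕ`). -/
def FireList {d : ℕ} (T : Set (Fin d → ℤ)) :
    (Fin d → ℕ) → List (Fin d → ℤ) → (Fin d → ℕ) → Prop
  | v, [], v' => v = v'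
  | v, τ :: ts, v' => τ ∈ T ∧ ∃ u : Fin d → ℕ,
      (∀ i, (u i : ℤ) = (v i : ℤ) + τ i) ∧ FireList T u ts v'

/-- A labeled vector addition system over the alphabet `α`. -/
structure LVAS (α : Type*) where
  d : ℕ
  T : Finset (Fin d → ℤ)
  s : Fin d → ℕ
  t : Fin d → ℕ
  /-- the labeling `h : T → Σ ∪ {ε}`, with `none` playing the role of `ε` -/
  lab : (Fin d → ℤ) → Option α

/-- The language of a labeled VAS: labels of firing sequences from source to target. -/
def LVAS.lang {α : Type*} (V : LVAS α) : Set (List α) :=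
  {w | ∃ ts : List (Fin V.d → ℤ), FireList (↑V.T) V.s ts V.t ∧ ts.filterMap V.lab = w}

/-- A VAS language is the language of some labeled VAS. -/
def IsVASLang {α : Type*} (L : Set (List α)) : Prop := ∃ V : LVAS α, L = V.lang

/-- Given a decomposition `n = ns 0 + ⋯ + ns (k-1)`, the index in `Fin n` of the
`i`-th position of the `j`-th block. -/
def blockIdx {k n : ℕ} (ns : Fin k → ℕ) (h : ∑ j, ns j = n) (j : Fin k)
    (i : Fin (ns j)) : Fin n :=
  ⟨(∑ j' ∈ Finset.univ.filter (fun j' => j' < j), ns j') + (i : ℕ), by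
    have hj : j ∉ Finset.univ.filter (fun j' => j' < j) := by simp
    have h1 : ∑ j' ∈ insert j (Finset.univ.filter (fun j' => j' < j)), ns j'
        ≤ ∑ j', ns j' := Finset.sum_le_sum_of_subset (Finset.subset_univ _)
    rw [Finset.sum_insert hj] at h1
    have h2 := i.isLt
    omega⟩

/-- The product set `F_{n1}(L1) × ⋯ × F_{nk}(Lk) ⊆ (Σ*)^n` for a decomposition
`n = n1 + ⋯ + nk`: those `n`-tuples whose `j`-th block belongs to `F_{nj}(Lj)`. -/
def ProdFT {α : Type*} {k n : ℕ} (ns : Fin k → ℕ) (Ls : Fin k → Set (List α))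
    (h : ∑ j, ns j = n) : Set (Fin n → List α) :=
  {w | ∀ j : Fin k,
    (fun i : Fin (ns j) => w (blockIdx ns h j i)) ∈ FactorTuples (ns j) (Ls j)}

/-- An `n`-dimensional unboundedness predicate. -/
def IsUnbPred {α : Type*} (n : ℕ) (p : Set (Fin n → List α) → Prop) : Prop :=
  (∀ S T : Set (Fin n → List α), p S → S ⊆ T → p T) ∧
  (∀ S T : Set (Fin n → List α), p (S ∪ T) → p S ∨ p T) ∧
  (∀ (k : ℕ) (Ls : Fin k → Set (List α)), p (FactorTuples n (LangConcFn Ls)) →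
     ∃ (ns : Fin k → ℕ) (h : ∑ j, ns j = n), p (ProdFT ns Ls h))

/-- Downward closure of a set of `n`-tuples of words w.r.t. the (scattered) subword
ordering in each component. -/
def dclT {α : Type*} {n : ℕ} (S : Set (Fin n → List α)) : Set (Fin n → List α) :=
  {u | ∃ v ∈ S, ∀ i, List.Sublist (u i) (v i)}

/-- `numF K w = |w|_K`, the largest `m` such that `m` non-overlapping factors from `K`
occur in `w` in order. -/
noncomputable def numF {α : Type*} (K : Set (List α)) (w : List α) : ℕ :=
  sSup {m | ∃ ws : Fin m → List α, (∀ i, ws i ∈ K) ∧ ws ∈ FactorTuples m {w}}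

/-- `cWrap c L = cLc = {cuc : u ∈ L}`. -/
def cWrap {α : Type*} (c : α) (L : Set (List α)) : Set (List α) :=
  {w | ∃ u ∈ L, w = c :: (u ++ [c])}

/-- `cSepStar c L = c(Lc)* = {c u1 c u2 c ⋯ um c : m ≥ 0, u1,…,um ∈ L}`. -/
def cSepStar {α : Type*} (c : α) (L : Set (List α)) : Set (List α) :=
  {w | ∃ us : List (List α), (∀ u ∈ us, u ∈ L) ∧
      w = c :: (us.map (fun u => u ++ [c])).flatten}

/-- A subset of `ℕ^n` is recognizable if it is saturated by an additive monoid
morphism into a finite monoid. -/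
def IsRecognizable {n : ℕ} (U : Set (Fin n → ℕ)) : Prop :=
  ∃ (M : Type) (_ : AddMonoid M) (_ : Finite M) (φ : (Fin n → ℕ) →+ M),
    U = φ ⁻¹' (φ '' U)

/-- `U ⊆ ℕ^n` is a section of a VAS reachability set. -/
def IsVASReachSection {n : ℕ} (U : Set (Fin n → ℕ)) : Prop :=
  ∃ (N : ℕ) (T : Finset (Fin N → ℤ)) (s : Fin N → ℕ) (I : Finset (Fin N))
    (x : Fin N → ℕ) (e : Fin n → Fin N),
    StrictMono e ∧ (∀ j, e j ∉ I) ∧ (∀ i, i ∉ I → ∃ j, e j = i) ∧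
    U = {u | ∃ v : Fin N → ℕ, (∃ ts, FireList (↑T) s ts v) ∧
          (∀ i ∈ I, v i = x i) ∧ (∀ j, v (e j) = u j)}

/-!
Write `L = L(V)` and run `V` in lockstep with a finite automaton that reads `w₁^{x₁} ⋯ wₙ^{xₙ}`
letter by letter and counts the completed copies of each `wᵢ` in `n` extra coordinates. The
automaton's control state is kept one-hot in further coordinates; a single VAS transition can test
it because no automaton transition is a self-loop. Fixing the coordinates of `V` to its target and
the control coordinates to the final state leaves exactly the counter vectors `x` with
`w₁^{x₁} ⋯ wₙ^{xₙ} ∈ L(V)`.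
-/

namespace VAS

variable {ι κ : Type*}

def Fires (τ : ι → ℤ) (v v' : ι → ℕ) : Prop := ∀ i, (v' i : ℤ) = v i + τ i

def Reach (T : Set (ι → ℤ)) : (ι → ℕ) → (ι → ℕ) → Prop :=
  Relation.ReflTransGen fun v v' => ∃ τ ∈ T, Fires τ v v'

lemma fires_zero_iff {v v' : ι → ℕ} : Fires 0 v v' ↔ v' = v := by
  simp [Fires, funext_iff]

lemma fires_natCast_iff {c v v' : ι → ℕ} : Fires (fun i => (c i : ℤ)) v v' ↔ v' = v + c := by
  simp only [Fires, funext_iff, Pi.add_apply]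
  exact forall_congr' fun i => by omega

lemma fires_sumElim_iff {τ : ι → ℤ} {σ : κ → ℤ} {a : ι → ℕ} {b : κ → ℕ} {y : ι ⊕ κ → ℕ} :
    Fires (Sum.elim τ σ) (Sum.elim a b) y ↔
      ∃ a' b', y = Sum.elim a' b' ∧ Fires τ a a' ∧ Fires σ b b' := by
  constructor
  · intro h
    exact ⟨y ∘ Sum.inl, y ∘ Sum.inr, (Sum.elim_comp_inl_inr y).symm,
      fun i => h (.inl i), fun k => h (.inr k)⟩
  · rintro ⟨a', b', rfl, ha, hb⟩ (i | k)
    exacts [ha i, hb k]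

lemma fires_single_sub_single [DecidableEq ι] (q q' : ι) :
    Fires (Pi.single q' 1 - Pi.single q 1) (Pi.single q 1) (Pi.single q' 1) := by
  intro i
  simp only [Pi.sub_apply, Pi.single_apply]
  split_ifs <;> simp

/-- This is how a VAS tests a control state held in one-hot encoding. -/
lemma fires_single_sub_single_iff [DecidableEq ι] {q q₀ q' : ι} (hq : q₀ ≠ q') {g : ι → ℕ} :
    Fires (Pi.single q' 1 - Pi.single q₀ 1) (Pi.single q 1) g ↔
      q₀ = q ∧ g = Pi.single q' 1 := by
  constructor
  · intro h
    have hq₀ : q₀ = q := by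
      by_contra hne
      have := h q₀
      simp [hne, hq] at this
    subst hq₀
    refine ⟨rfl, funext fun i => ?_⟩
    have := h i
    simp only [Pi.sub_apply, Pi.single_apply] at this ⊢
    split_ifs at this ⊢ <;> omega
  · rintro ⟨rfl, rfl⟩
    exact fires_single_sub_single q₀ q'

lemma exists_fireList_iff_reach {d : ℕ} {T : Set (Fin d → ℤ)} {v v' : Fin d → ℕ} :
    (∃ ts, FireList T v ts v') ↔ Reach T v v' := by
  constructor
  · rintro ⟨ts, h⟩
    induction ts generalizing v with
    | nil => exact h ▸ .refl
    | cons τ ts ih =>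
      obtain ⟨hτ, u, hu, hrest⟩ := h
      exact .head ⟨τ, hτ, hu⟩ (ih hrest)
  · intro h
    induction h using Relation.ReflTransGen.head_induction_on with
    | refl => exact ⟨[], rfl⟩
    | head hstep _ ih =>
      obtain ⟨τ, hτ, hfires⟩ := hstep
      obtain ⟨ts, hts⟩ := ih
      exact ⟨τ :: ts, hτ, _, hfires, hts⟩

lemma reach_comp_equiv (σ : κ ≃ ι) {T : Set (ι → ℤ)} {v v' : ι → ℕ} :
    Reach ((· ∘ σ) '' T) (v ∘ σ) (v' ∘ σ) ↔ Reach T v v' := by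
  unfold Reach
  constructor
  · intro h
    have := h.lift (p := fun w w' => ∃ τ ∈ T, Fires τ w w') (· ∘ σ.symm) <| by
      rintro u u' ⟨_, ⟨τ, hτ, rfl⟩, hfires⟩
      exact ⟨τ, hτ, fun i => by simpa using hfires (σ.symm i)⟩
    simpa [Function.onFun, Function.comp_assoc] using this
  · refine fun h => h.lift (· ∘ σ) ?_
    rintro u u' ⟨τ, hτ, hfires⟩
    dsimp only [Function.onFun]
    exact ⟨τ ∘ σ, ⟨τ, hτ, rfl⟩, fun k => hfires (σ k)⟩

theorem isVASReachSection_of_reach {n : ℕ} [Fintype κ] {T : Set (Fin n ⊕ κ → ℤ)}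
    (hT : T.Finite) (s : Fin n ⊕ κ → ℕ) (y : κ → ℕ) :
    IsVASReachSection {x | Reach T s (Sum.elim x y)} := by
  let σ : Fin (n + Fintype.card κ) ≃ Fin n ⊕ κ :=
    finSumFinEquiv.symm.trans ((Equiv.refl _).sumCongr (Fintype.equivFin κ).symm)
  have hσl (j : Fin n) : σ (Fin.castAdd _ j) = .inl j := by simp [σ]
  have hσr (k) : σ (Fin.natAdd n k) = .inr ((Fintype.equivFin κ).symm k) := by simp [σ]
  classical
  refine ⟨_, (hT.image (· ∘ σ)).toFinset, s ∘ σ, Finset.univ.image (Fin.natAdd n),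
    Sum.elim 0 y ∘ σ, Fin.castAdd _, Fin.strictMono_castAdd _, ?_, ?_, ?_⟩
  · intro j
    simp only [Finset.mem_image, Finset.mem_univ, true_and, not_exists, Fin.ext_iff,
      Fin.val_natAdd, Fin.val_castAdd]
    omega
  · intro i hi
    induction i using Fin.addCases with
    | left j => exact ⟨j, rfl⟩
    | right k => simp at hi
  · ext u
    simp only [Set.Finite.coe_toFinset, exists_fireList_iff_reach,
      Finset.mem_image, Finset.mem_univ, true_and, forall_exists_index, forall_apply_eq_imp_iff]
    change Reach T s _ ↔ ∃ v, _
    rw [← reach_comp_equiv σ]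
    constructor
    · exact fun h => ⟨_, h, fun k => by simp [hσr], fun j => by simp [hσl]⟩
    · rintro ⟨v, hv, hI, he⟩
      convert hv
      funext i
      induction i using Fin.addCases with
      | left j => simp [hσl, he]
      | right k => simp [hσr, hI]

end VAS

namespace LTS

variable {α S S₁ S₂ : Type*}

/-- Runs of a labeled transition relation, with `none` labelling silent steps. -/
inductive Reads (R : S → Option α → S → Prop) : S → List α → S → Prop
  | refl (s : S) : Reads R s [] s
  | tail {s t u : S} {w : List α} {a : Option α} :
      Reads R s w t → R t a u → Reads R s (w ++ a.toList) u

variable {R : S → Option α → S → Prop}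

lemma Reads.single {s t : S} {a : Option α} (h : R s a t) : Reads R s a.toList t := by
  simpa using (Reads.refl s).tail h

lemma Reads.trans {s t u : S} {w w' : List α} (h : Reads R s w t) (h' : Reads R t w' u) :
    Reads R s (w ++ w') u := by
  induction h' with
  | refl => simpa using h
  | tail _ hstep ih => simpa using ih.tail hstep

lemma Reads.head {s t u : S} {a : Option α} {w : List α} (hstep : R s a t)
    (h : Reads R t w u) : Reads R s (a.toList ++ w) u :=
  (Reads.single hstep).trans h

lemma Reads.exists_of_append_singleton {s u : S} {w : List α} {b : α}
    (h : Reads R s (w ++ [b]) u) :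
    ∃ t t', Reads R s w t ∧ R t (some b) t' ∧ Reads R t' [] u := by
  generalize hw : w ++ [b] = w' at h
  induction h generalizing w with
  | refl => simp at hw
  | @tail t _ w₀ a hrun hstep ih =>
    cases a with
    | none =>
      obtain ⟨t₁, t₂, h₁, hb, h₂⟩ := ih (by simpa using hw)
      exact ⟨t₁, t₂, h₁, hb, by simpa using h₂.tail hstep⟩
    | some c =>
      obtain ⟨rfl, hc⟩ := List.append_inj' hw rfl
      obtain rfl : b = c := by simpa using hc
      exact ⟨t, _, hrun, hstep, .refl _⟩

inductive SyncStep (R₁ : S₁ → Option α → S₁ → Prop) (R₂ : S₂ → Option α → S₂ → Prop) :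
    S₁ × S₂ → S₁ × S₂ → Prop
  | left {s₁ t₁ : S₁} {s₂ : S₂} : R₁ s₁ none t₁ → SyncStep R₁ R₂ (s₁, s₂) (t₁, s₂)
  | right {s₁ : S₁} {s₂ t₂ : S₂} : R₂ s₂ none t₂ → SyncStep R₁ R₂ (s₁, s₂) (s₁, t₂)
  | both {s₁ t₁ : S₁} {s₂ t₂ : S₂} {a : Option α} :
      R₁ s₁ a t₁ → R₂ s₂ a t₂ → SyncStep R₁ R₂ (s₁, s₂) (t₁, t₂)

variable {R₁ : S₁ → Option α → S₁ → Prop} {R₂ : S₂ → Option α → S₂ → Prop}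

lemma reflTransGen_syncStep_of_reads_nil {s₁ t₁ : S₁} (s₂ : S₂) (h : Reads R₁ s₁ [] t₁) :
    Relation.ReflTransGen (SyncStep R₁ R₂) (s₁, s₂) (t₁, s₂) := by
  generalize hw : ([] : List α) = w at h
  induction h with
  | refl => exact .refl
  | tail _ hstep ih =>
    obtain ⟨rfl, ha⟩ := List.append_eq_nil_iff.mp hw.symm
    rw [Option.toList_eq_nil_iff] at ha
    exact (ih rfl).tail (.left (ha ▸ hstep))

theorem reflTransGen_syncStep_iff {s₁ t₁ : S₁} {s₂ t₂ : S₂} :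
    Relation.ReflTransGen (SyncStep R₁ R₂) (s₁, s₂) (t₁, t₂) ↔
      ∃ w, Reads R₁ s₁ w t₁ ∧ Reads R₂ s₂ w t₂ := by
  constructor
  · generalize ht : (t₁, t₂) = t
    intro h
    induction h generalizing t₁ t₂ with
    | refl => cases ht; exact ⟨[], .refl _, .refl _⟩
    | tail _ hstep ih =>
      subst ht
      cases hstep with
      | left h => obtain ⟨w, h₁, h₂⟩ := ih rfl; exact ⟨w, by simpa using h₁.tail h, h₂⟩
      | right h => obtain ⟨w, h₁, h₂⟩ := ih rfl; exact ⟨w, h₁, by simpa using h₂.tail h⟩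
      | both h h' => obtain ⟨w, h₁, h₂⟩ := ih rfl; exact ⟨_, h₁.tail h, h₂.tail h'⟩
  · rintro ⟨w, h₁, h₂⟩
    induction h₂ generalizing t₁ with
    | refl => exact reflTransGen_syncStep_of_reads_nil _ h₁
    | @tail t₂ _ w a _ hstep ih =>
      cases a with
      | none => exact (ih (by simpa using h₁)).tail (.right hstep)
      | some b =>
        obtain ⟨u, u', hu, hb, hu'⟩ := h₁.exists_of_append_singleton
        exact ((ih hu).tail (.both hb hstep)).trans (reflTransGen_syncStep_of_reads_nil _ hu')

end LTS


open VAS LTS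

variable {α : Type*}

lemma fireList_append {d : ℕ} {T : Set (Fin d → ℤ)} {u v w : Fin d → ℕ}
    {ts ts' : List (Fin d → ℤ)} (h : FireList T u ts v) (h' : FireList T v ts' w) :
    FireList T u (ts ++ ts') w := by
  induction ts generalizing u with
  | nil => exact h ▸ h'
  | cons τ ts ih =>
    obtain ⟨hτ, u', hu', hrest⟩ := h
    exact ⟨hτ, u', hu', ih hrest⟩

namespace LVAS

def Move (V : LVAS α) (v : Fin V.d → ℕ) (a : Option α) (v' : Fin V.d → ℕ) : Prop :=
  ∃ τ ∈ V.T, V.lab τ = a ∧ Fires τ v v'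

lemma reads_move_of_fireList (V : LVAS α) {v v' : Fin V.d → ℕ} {ts : List (Fin V.d → ℤ)}
    (h : FireList (↑V.T) v ts v') : Reads V.Move v (ts.filterMap V.lab) v' := by
  induction ts generalizing v with
  | nil => exact h ▸ .refl v
  | cons τ ts ih =>
    obtain ⟨hτ, u, hu, hrest⟩ := h
    have := (ih hrest).head ⟨τ, hτ, rfl, hu⟩
    cases hl : V.lab τ <;> simpa [List.filterMap_cons, hl] using this

lemma exists_fireList_of_reads (V : LVAS α) {v v' : Fin V.d → ℕ} {w : List α}
    (h : Reads V.Move v w v') : ∃ ts, FireList (↑V.T) v ts v' ∧ ts.filterMap V.lab = w := by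
  induction h with
  | refl => exact ⟨[], rfl, rfl⟩
  | tail _ hstep ih =>
    obtain ⟨ts, hts, rfl⟩ := ih
    obtain ⟨τ, hτ, rfl, hfires⟩ := hstep
    exact ⟨ts ++ [τ], fireList_append hts ⟨hτ, _, hfires, rfl⟩, by cases hl : V.lab τ <;> simp [hl]⟩

lemma mem_lang_iff_reads (V : LVAS α) {w : List α} :
    w ∈ V.lang ↔ Reads V.Move V.s w V.t :=
  ⟨fun ⟨_, hts, hw⟩ => hw ▸ V.reads_move_of_fireList hts, V.exists_fireList_of_reads⟩

end LVAS

section CountingAutomaton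

variable {Q : Type*} {n : ℕ}

/-- The step relation of a finite automaton whose transitions `(q, a, c, q')` read `a` and add
`c` to a vector of `n` counters. -/
def countStep (δ : Set (Q × Option α × (Fin n → ℕ) × Q)) (s : Q × (Fin n → ℕ)) (a : Option α)
    (s' : Q × (Fin n → ℕ)) : Prop :=
  ∃ c, (s.1, a, c, s'.1) ∈ δ ∧ s'.2 = s.2 + c

def SelfLoopFree (δ : Set (Q × Option α × (Fin n → ℕ) × Q)) : Prop := ∀ e ∈ δ, e.1 ≠ e.2.2.2

namespace LVAS

variable [DecidableEq Q] (V : LVAS α)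

/-- Configurations of the product of `V` with a counting automaton: counters, then the
configuration of `V`, then the control state in one-hot encoding. -/
def prodEncode (s : (Fin V.d → ℕ) × Q × (Fin n → ℕ)) : Fin n ⊕ Fin V.d ⊕ Q → ℕ :=
  Sum.elim s.2.2 (Sum.elim s.1 (Pi.single s.2.1 1))

def prodVec (c : Fin n → ℕ) (τ : Fin V.d → ℤ) (Δ : Q → ℤ) : Fin n ⊕ Fin V.d ⊕ Q → ℤ :=
  Sum.elim (fun j => (c j : ℤ)) (Sum.elim τ Δ)

def stateShift (e : Q × Option α × (Fin n → ℕ) × Q) : Q → ℤ :=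
  Pi.single e.2.2.2 1 - Pi.single e.1 1

def prodTransitions (δ : Set (Q × Option α × (Fin n → ℕ) × Q)) :
    Set (Fin n ⊕ Fin V.d ⊕ Q → ℤ) :=
  (fun τ => V.prodVec 0 τ 0) '' {τ ∈ (V.T : Set _) | V.lab τ = none} ∪
  (fun e => V.prodVec e.2.2.1 0 (stateShift e)) '' {e ∈ δ | e.2.1 = none} ∪
  (fun p => V.prodVec p.2.2.2.1 p.1 (stateShift p.2)) ''
    {p ∈ (V.T : Set _) ×ˢ δ | V.lab p.1 = p.2.2.1}

variable {V} {δ : Set (Q × Option α × (Fin n → ℕ) × Q)}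

lemma prodTransitions_finite (hδ : δ.Finite) : (V.prodTransitions δ).Finite :=
  (((V.T.finite_toSet.sep _).image _).union ((hδ.sep _).image _)).union
    (((V.T.finite_toSet.prod hδ).sep _).image _)

lemma fires_prodVec_iff {c : Fin n → ℕ} {τ : Fin V.d → ℤ} {Δ : Q → ℤ}
    {s : (Fin V.d → ℕ) × Q × (Fin n → ℕ)} {y : Fin n ⊕ Fin V.d ⊕ Q → ℕ} :
    Fires (V.prodVec c τ Δ) (V.prodEncode s) y ↔
      ∃ v g, y = Sum.elim (s.2.2 + c) (Sum.elim v g) ∧ Fires τ s.1 v ∧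
        Fires Δ (Pi.single s.2.1 1) g := by
  simp only [prodVec, prodEncode, fires_sumElim_iff, fires_natCast_iff]
  constructor
  · rintro ⟨x, _, rfl, rfl, v, g, rfl, hv, hg⟩
    exact ⟨v, g, rfl, hv, hg⟩
  · rintro ⟨v, g, rfl, hv, hg⟩
    exact ⟨_, _, rfl, rfl, v, g, rfl, hv, hg⟩

lemma exists_fires_of_syncStep {s t : (Fin V.d → ℕ) × Q × (Fin n → ℕ)}
    (h : SyncStep V.Move (countStep δ) s t) :
    ∃ θ ∈ V.prodTransitions δ, Fires θ (V.prodEncode s) (V.prodEncode t) := by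
  cases h with
  | left hV =>
    obtain ⟨τ, hτ, hl, hv⟩ := hV
    refine ⟨_, .inl (.inl ⟨τ, ⟨hτ, hl⟩, rfl⟩), fires_prodVec_iff.mpr ?_⟩
    exact ⟨_, _, by simp [prodEncode], hv, fires_zero_iff.mpr rfl⟩
  | right hA =>
    obtain ⟨c, hδc, hx⟩ := hA
    refine ⟨_, .inl (.inr ⟨_, ⟨hδc, rfl⟩, rfl⟩), fires_prodVec_iff.mpr ?_⟩
    exact ⟨_, Pi.single _ 1, by simp [prodEncode, hx], fires_zero_iff.mpr rfl,
      fires_single_sub_single _ _⟩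
  | both hV hA =>
    obtain ⟨τ, hτ, hl, hv⟩ := hV
    obtain ⟨c, hδc, hx⟩ := hA
    refine ⟨_, .inr ⟨(τ, _), ⟨⟨hτ, hδc⟩, hl⟩, rfl⟩, fires_prodVec_iff.mpr ?_⟩
    exact ⟨_, Pi.single _ 1, by simp [prodEncode, hx], hv, fires_single_sub_single _ _⟩

lemma exists_syncStep_of_fires (hloop : SelfLoopFree δ)
    {s : (Fin V.d → ℕ) × Q × (Fin n → ℕ)} {θ : Fin n ⊕ Fin V.d ⊕ Q → ℤ}
    (hθ : θ ∈ V.prodTransitions δ) {y : Fin n ⊕ Fin V.d ⊕ Q → ℕ}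
    (h : Fires θ (V.prodEncode s) y) :
    ∃ t, y = V.prodEncode t ∧ SyncStep V.Move (countStep δ) s t := by
  obtain ⟨v, q, x⟩ := s
  rcases hθ with (⟨τ, ⟨hτ, hl⟩, rfl⟩ | ⟨⟨q₀, a, c, q'⟩, ⟨he, rfl⟩, rfl⟩) |
    ⟨⟨τ, q₀, a, c, q'⟩, ⟨⟨hτ, he⟩, hl⟩, rfl⟩ <;>
  obtain ⟨v', g, rfl, hv, hg⟩ := fires_prodVec_iff.mp h
  · obtain rfl := fires_zero_iff.mp hg
    exact ⟨(v', q, x), by simp [prodEncode], .left ⟨τ, hτ, hl, hv⟩⟩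
  · obtain rfl := fires_zero_iff.mp hv
    obtain ⟨rfl, rfl⟩ := (fires_single_sub_single_iff (hloop _ he)).mp hg
    exact ⟨(v', q', x + c), rfl, .right ⟨c, he, rfl⟩⟩
  · obtain ⟨rfl, rfl⟩ := (fires_single_sub_single_iff (hloop _ he)).mp hg
    exact ⟨(v', q', x + c), rfl, .both ⟨τ, hτ, hl, hv⟩ ⟨c, he, rfl⟩⟩

lemma prodEncode_injective : Function.Injective (V.prodEncode (Q := Q) (n := n)) := by
  rintro ⟨v, q, x⟩ ⟨v', q', x'⟩ h
  simp only [prodEncode, Sum.elim_eq_iff] at h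
  obtain ⟨rfl, rfl, hq⟩ := h
  have : q = q' := by simpa [Pi.single_apply] using congrFun hq q
  rw [this]

theorem reach_prodEncode_iff (hloop : SelfLoopFree δ)
    {s t : (Fin V.d → ℕ) × Q × (Fin n → ℕ)} :
    Reach (V.prodTransitions δ) (V.prodEncode s) (V.prodEncode t) ↔
      Relation.ReflTransGen (SyncStep V.Move (countStep δ)) s t := by
  constructor
  · suffices ∀ y, Reach (V.prodTransitions δ) (V.prodEncode s) y →
        ∃ t, y = V.prodEncode t ∧ Relation.ReflTransGen (SyncStep V.Move (countStep δ)) s t by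
      intro h
      obtain ⟨t', ht', hrun⟩ := this _ h
      exact prodEncode_injective ht' ▸ hrun
    intro y h
    induction h with
    | refl => exact ⟨s, rfl, .refl⟩
    | tail _ hstep ih =>
      obtain ⟨t', rfl, hrun⟩ := ih
      obtain ⟨θ, hθ, hfires⟩ := hstep
      obtain ⟨t'', rfl, hsync⟩ := exists_syncStep_of_fires hloop hθ hfires
      exact ⟨t'', rfl, hrun.tail hsync⟩
  · intro h
    exact h.lift (V.prodEncode) fun _ _ hsync => exists_fires_of_syncStep hsync

end LVAS

end CountingAutomaton

theorem isVASReachSection_of_countStep (V : LVAS α) {Q : Type*} [Fintype Q] [DecidableEq Q]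
    {n : ℕ} {δ : Set (Q × Option α × (Fin n → ℕ) × Q)} (hδ : δ.Finite)
    (hloop : SelfLoopFree δ) (q₀ q_f : Q) :
    IsVASReachSection {x | ∃ w ∈ V.lang, Reads (countStep δ) (q₀, 0) w (q_f, x)} := by
  convert isVASReachSection_of_reach (LVAS.prodTransitions_finite hδ) (V.prodEncode (V.s, q₀, 0))
    (Sum.elim V.t (Pi.single q_f 1)) using 3 with x
  change _ ↔ Reach _ _ (V.prodEncode (V.t, q_f, x))
  simp only [LVAS.reach_prodEncode_iff hloop, reflTransGen_syncStep_iff, V.mem_lang_iff_reads]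

section Words

lemma update_zero_add_single {ι M : Type*} [DecidableEq ι] [AddZeroClass M] (f : ι → M) (i : ι) :
    Function.update f i 0 + Pi.single i (f i) = f := by
  funext j
  by_cases h : j = i <;> simp [h]

lemma wpow_add (w : List α) (k l : ℕ) : wpow w (k + l) = wpow w k ++ wpow w l := by
  simp only [wpow, List.replicate_add, List.flatten_append]

@[simp] lemma wpow_zero (w : List α) : wpow w 0 = [] := rfl

@[simp] lemma wpow_one (w : List α) : wpow w 1 = w := by
  simp [wpow]

variable {n : ℕ} (ws : Fin n → List α)

def wpowProd (x : Fin n → ℕ) : List α := (List.ofFn fun i => wpow (ws i) (x i)).flatten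

@[simp] lemma wpowProd_zero : wpowProd ws 0 = [] := by
  simp [wpowProd, wpow]

lemma wpowProd_add_single {x : Fin n → ℕ} {j : Fin n} (hx : ∀ i, j < i → x i = 0) (k : ℕ) :
    wpowProd ws (x + Pi.single j k) = wpowProd ws x ++ wpow (ws j) k := by
  induction n with
  | zero => exact j.elim0
  | succ n ih =>
    simp only [wpowProd, List.ofFn_succ', List.concat_eq_append, List.flatten_append,
      List.flatten_singleton] at ih ⊢
    induction j using Fin.lastCases with
    | last =>
      have hlast (i : Fin n) :
          (x + Pi.single (Fin.last n) k : Fin (n + 1) → ℕ) i.castSucc = x i.castSucc := by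
        simp [Fin.castSucc_ne_last]
      simp [hlast, wpow_add]
    | cast j =>
      have hlast : x (Fin.last n) = 0 := hx _ (Fin.castSucc_lt_last j)
      have hcast (i : Fin n) : (x + Pi.single j.castSucc k : Fin (n + 1) → ℕ) i.castSucc =
          ((fun i => x i.castSucc) + Pi.single j k : Fin n → ℕ) i := by
        simp [Pi.single_apply]
      have hlast' : (x + Pi.single j.castSucc k : Fin (n + 1) → ℕ) (Fin.last n) = 0 := by
        simp [hlast, (Fin.castSucc_lt_last j).ne']
      have := ih (ws ∘ Fin.castSucc) (x := fun i => x i.castSucc)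
        (fun i hi => hx _ (Fin.castSucc_lt_castSucc_iff.mpr hi))
      simp only [Function.comp_apply] at this
      simp only [hcast, hlast', hlast, this, wpow_zero, List.append_nil]

end Words

section Reader

variable {n : ℕ} (ws : Fin n → List α)

abbrev ReaderState := Option (Σ j : Fin n, Fin ((ws j).length + 2))

def readerInit : ReaderState ws := if h : 0 < n then some ⟨⟨0, h⟩, 0⟩ else none

/-- In state `⟨j, p⟩` the automaton has read `p` letters of the current copy of `ws j`; the final
silent step from `p = |ws j| + 1` back to `0` counts the copy. This detour keeps the automaton free
of self-loops even when `ws j = []`. -/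
def readerMoves : Set (ReaderState ws × Option α × (Fin n → ℕ) × ReaderState ws) :=
  Set.range (fun jp : Σ j : Fin n, Fin ((ws j).length + 1) =>
      (some ⟨jp.1, jp.2.castSucc⟩, (ws jp.1)[(jp.2 : ℕ)]?, 0, some ⟨jp.1, jp.2.succ⟩)) ∪
    Set.range (fun j => (some ⟨j, Fin.last _⟩, none, Pi.single j 1, some ⟨j, 0⟩)) ∪
    (fun jj : Fin n × Fin n => (some ⟨jj.1, 0⟩, none, 0, some ⟨jj.2, 0⟩)) '' {jj | jj.1 < jj.2} ∪
    Set.range (fun j => (some ⟨j, 0⟩, none, 0, none))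

lemma readerMoves_finite : (readerMoves ws).Finite := by
  unfold readerMoves
  exact Set.toFinite _

lemma selfLoopFree_readerMoves : SelfLoopFree (readerMoves ws) := by
  intro e he
  rcases he with ((⟨⟨j, p⟩, rfl⟩ | ⟨j, rfl⟩) | ⟨⟨j, j'⟩, hj, rfl⟩) | ⟨j, rfl⟩
  · simp [Fin.ext_iff]
  · simp [Fin.ext_iff]
  · rintro ⟨⟩
    exact lt_irrefl j hj
  · simp

def ReaderInv : ReaderState ws → List α → (Fin n → ℕ) → Prop
  | none, w, x => w = wpowProd ws x
  | some ⟨j, p⟩, w, x => w = wpowProd ws x ++ (ws j).take p ∧ ∀ i, j < i → x i = 0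

lemma readerInv_init : ReaderInv ws (readerInit ws) [] 0 := by
  unfold readerInit
  split_ifs <;> simp [ReaderInv]

lemma ReaderInv.step {q q' : ReaderState ws} {a : Option α} {c : Fin n → ℕ} {w : List α}
    {x : Fin n → ℕ} (he : (q, a, c, q') ∈ readerMoves ws) (h : ReaderInv ws q w x) :
    ReaderInv ws q' (w ++ a.toList) (x + c) := by
  rcases he with ((⟨⟨j, p⟩, he⟩ | ⟨j, he⟩) | ⟨⟨j, j'⟩, hj, he⟩) | ⟨j, he⟩ <;>
    simp only [Prod.mk.injEq] at he <;> obtain ⟨rfl, rfl, rfl, rfl⟩ := he <;>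
    obtain ⟨rfl, hx⟩ := h
  · exact ⟨by simp [List.take_add_one], by simpa using hx⟩
  · refine ⟨?_, fun i hi => ?_⟩
    · simp [wpowProd_add_single ws hx, List.take_of_length_le]
    · simp [hx i hi, hi.ne']
  · exact ⟨by simp, fun i hi => by simpa using hx i (hj.trans hi)⟩
  · simp [ReaderInv]

lemma readerInv_of_reads {w : List α} {s : ReaderState ws × (Fin n → ℕ)}
    (h : Reads (countStep (readerMoves ws)) (readerInit ws, 0) w s) : ReaderInv ws s.1 w s.2 := by
  induction h with
  | refl => exact readerInv_init ws
  | tail _ hstep ih =>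
    obtain ⟨c, he, hx⟩ := hstep
    exact hx ▸ ih.step ws he

lemma reads_take (j : Fin n) (x : Fin n → ℕ) (p : Fin ((ws j).length + 2)) :
    Reads (countStep (readerMoves ws)) (some ⟨j, 0⟩, x) ((ws j).take p) (some ⟨j, p⟩, x) := by
  induction p using Fin.induction with
  | zero => exact .refl _
  | succ p ih =>
    have hmove : countStep (readerMoves ws) (some ⟨j, p.castSucc⟩, x) (ws j)[(p : ℕ)]?
        (some ⟨j, p.succ⟩, x) := ⟨0, .inl (.inl (.inl ⟨⟨j, p⟩, rfl⟩)), by simp⟩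
    simpa [List.take_add_one] using ih.tail hmove

lemma reads_copy (j : Fin n) (x : Fin n → ℕ) :
    Reads (countStep (readerMoves ws)) (some ⟨j, 0⟩, x) (ws j)
      (some ⟨j, 0⟩, x + Pi.single j 1) := by
  have hmove : countStep (readerMoves ws) (some ⟨j, Fin.last _⟩, x) none
      (some ⟨j, 0⟩, x + Pi.single j 1) := ⟨_, .inl (.inl (.inr ⟨j, rfl⟩)), rfl⟩
  simpa [List.take_of_length_le] using (reads_take ws j x (Fin.last _)).tail hmove

lemma reads_wpow (j : Fin n) (x : Fin n → ℕ) (k : ℕ) :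
    Reads (countStep (readerMoves ws)) (some ⟨j, 0⟩, x) (wpow (ws j) k)
      (some ⟨j, 0⟩, x + Pi.single j k) := by
  induction k with
  | zero => simpa using .refl _
  | succ k ih =>
    simpa [wpow_add, add_assoc, ← Pi.single_add] using ih.trans (reads_copy ws j _)

/-- Looping on `⟨j, 0⟩` reads the last block `(ws j)^{x j}`. -/
lemma reads_wpowProd_of_reads_update {j : Fin n}
    (hj : ∀ x : Fin n → ℕ, (∀ i, j ≤ i → x i = 0) →
      Reads (countStep (readerMoves ws)) (readerInit ws, 0) (wpowProd ws x) (some ⟨j, 0⟩, x))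
    {x : Fin n → ℕ} (hx : ∀ i, j < i → x i = 0) :
    Reads (countStep (readerMoves ws)) (readerInit ws, 0) (wpowProd ws x) (some ⟨j, 0⟩, x) := by
  have hx' : ∀ i, j ≤ i → Function.update x j 0 i = 0 := by
    intro i hi
    rcases hi.lt_or_eq with hi | rfl
    · simp [hi.ne', hx i hi]
    · simp
  have hword := wpowProd_add_single ws (fun i hi => hx' i hi.le) (x j)
  have hrun := (hj _ hx').trans (reads_wpow ws j _ (x j))
  rw [update_zero_add_single] at hword
  rwa [update_zero_add_single, ← hword] at hrun

lemma reads_wpowProd_of_forall_lt (m : ℕ) (hm : m < n) {x : Fin n → ℕ}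
    (hx : ∀ i : Fin n, m < i → x i = 0) :
    Reads (countStep (readerMoves ws)) (readerInit ws, 0) (wpowProd ws x)
      (some ⟨⟨m, hm⟩, 0⟩, x) := by
  induction m generalizing x with
  | zero =>
    refine reads_wpowProd_of_reads_update ws (fun x hx => ?_) hx
    obtain rfl : x = 0 := funext fun i => hx i (Nat.zero_le _)
    simpa [readerInit, hm] using Reads.refl _
  | succ m ih =>
    refine reads_wpowProd_of_reads_update ws (fun x hx => ?_) hx
    have hlt : (⟨m, by omega⟩ : Fin n) < ⟨m + 1, hm⟩ := Fin.mk_lt_mk.mpr m.lt_succ_self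
    have hnext : countStep (readerMoves ws) (some ⟨⟨m, by omega⟩, 0⟩, x) none
        (some ⟨⟨m + 1, hm⟩, 0⟩, x) := ⟨0, .inl (.inr ⟨(_, _), hlt, rfl⟩), by simp⟩
    simpa using (ih (by omega) fun i hi => hx i hi).tail hnext

theorem reads_readerMoves_iff {w : List α} {x : Fin n → ℕ} :
    Reads (countStep (readerMoves ws)) (readerInit ws, 0) w (none, x) ↔ w = wpowProd ws x := by
  refine ⟨readerInv_of_reads ws, ?_⟩
  rintro rfl
  rcases Nat.eq_zero_or_pos n with rfl | hn
  · obtain rfl := Subsingleton.elim x 0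
    simpa [readerInit, wpowProd] using Reads.refl _
  · have hrun := reads_wpowProd_of_forall_lt ws (n - 1) (by omega) (x := x)
      fun i hi => absurd i.isLt (by omega)
    have hfinish : countStep (readerMoves ws) (some ⟨⟨n - 1, by omega⟩, 0⟩, x) none (none, x) :=
      ⟨0, .inr ⟨_, rfl⟩, by simp⟩
    simpa using hrun.tail hfinish

end Reader

theorem bounded_vas_language_section_general {α : Type} {n : ℕ}
    (ws : Fin n → List α) (L : Set (List α)) (hL : IsVASLang L) :
    IsVASReachSection
      {x : Fin n → ℕ | (List.ofFn fun i => wpow (ws i) (x i)).flatten ∈ L} := by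
  obtain ⟨V, rfl⟩ := hL
  have h := isVASReachSection_of_countStep V (readerMoves_finite ws) (selfLoopFree_readerMoves ws)
    (readerInit ws) none
  simpa only [reads_readerMoves_iff, exists_eq_right, wpowProd] using h

/-- If `L ⊆ w1*⋯wn*` is a VAS language, then
`U = {(x1,…,xn) : w1^{x1}⋯wn^{xn} ∈ L}` is a section of the reachability set of
some vector addition system. -/
theorem bounded_vas_language_section {α : Type} [Fintype α] {n : ℕ}
    (ws : Fin n → List α) (L : Set (List α)) (hL : IsVASLang L)
    (hb : L ⊆ LangConcFn fun i => LangStar {ws i}) :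
    IsVASReachSection
      {x : Fin n → ℕ | (List.ofFn fun i => wpow (ws i) (x i)).flatten ∈ L} :=
  bounded_vas_language_section_general ws L hL
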